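/- arXiv:math/9811075 — 2 statements merged into one kernel-verified Lean document; each statement's English description precedes it below -/
import Mathlib

section
/- Let x_i ≥ 0 for i ∈ I (|I| indexed scores) and x_j ≥ 0 for j ∈ J (dihedral angles) satisfy linear constraints Ax ≤ b, with Σ_{j∈J} x_j ≤ 2πN. Let c_i = −1 for i ∈ I and c_j = 0 for j ∈ J. Suppose z ≥ 0 satisfies zA_i > c_i − ε for all i, with ε < 10^{-8}, and p·pt + z·b < 7.9999·pt where p ≤ 116 and N ≤ 60. Then p·pt + c·x ≤ [7.9999·pt + 10^{-8}(116·pt + 500)]/(1 + 10^{-8}) < 8·pt. -/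
open Real Matrix

lemma arctan_lower (t : ℝ) (ht : 0 ≤ t) : t - t ^ 3 / 3 ≤ Real.arctan t := by
  have hmono : Monotone (fun x : ℝ => Real.arctan x - (x - x ^ 3 / 3)) := by
    apply monotone_of_deriv_nonneg
    · exact Real.differentiable_arctan.sub (by fun_prop)
    · intro x
      have hd : HasDerivAt (fun x : ℝ => Real.arctan x - (x - x ^ 3 / 3))
          (1 / (1 + x ^ 2) - (1 - x ^ 2)) x := by
        have h1 := Real.hasDerivAt_arctan x
        have h2 : HasDerivAt (fun x : ℝ => x - x ^ 3 / 3) (1 - x ^ 2) x := by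
          have := (hasDerivAt_id x).sub ((hasDerivAt_pow 3 x).div_const 3)
          exact this.congr_deriv (by push_cast; ring)
        exact h1.sub h2
      rw [hd.deriv]
      have h2 : (0:ℝ) < 1 + x ^ 2 := by positivity
      rw [div_sub' (ne_of_gt h2), le_div_iff₀ h2]
      nlinarith [sq_nonneg (x^2)]
  have := hmono ht
  simpa using this

lemma pt_lower (pt : ℝ)
    (hpt : pt = 4 * Real.arctan (Real.sqrt 2 / 5) - Real.pi / 3) :
    0.054 ≤ pt := by
  have hs2 : (1.414213 : ℝ) ≤ Real.sqrt 2 := by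
    nlinarith [Real.sqrt_nonneg 2, Real.sq_sqrt (by norm_num : (0:ℝ) ≤ 2)]
  have hs2' : Real.sqrt 2 ≤ 1.4142136 := by
    nlinarith [Real.sqrt_nonneg 2, Real.sq_sqrt (by norm_num : (0:ℝ) ≤ 2)]
  have hat := arctan_lower (Real.sqrt 2 / 5) (by positivity)
  have hπ := Real.pi_lt_d6
  rw [hpt]
  have hsq : Real.sqrt 2 ^ 2 = 2 := Real.sq_sqrt (by norm_num)
  nlinarith [Real.sqrt_nonneg 2]

theorem stmt_9 (pt : ℝ)
    (hpt : pt = 4 * Real.arctan (Real.sqrt 2 / 5) - Real.pi / 3)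
    (nI nJ m : ℕ) (p N : ℕ) (ε : ℝ)
    (A : Matrix (Fin m) (Fin nI ⊕ Fin nJ) ℝ) (b : Fin m → ℝ)
    (c x : Fin nI ⊕ Fin nJ → ℝ) (z : Fin m → ℝ)
    (hcI : ∀ i : Fin nI, c (Sum.inl i) = -1)
    (hcJ : ∀ j : Fin nJ, c (Sum.inr j) = 0)
    (hx : ∀ idx, 0 ≤ x idx)
    (hAx : ∀ i, (A.mulVec x) i ≤ b i)
    (hxJ : ∑ j : Fin nJ, x (Sum.inr j) ≤ 2 * Real.pi * N)
    (hz : ∀ i, 0 ≤ z i)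
    (hε0 : 0 < ε) (hε : ε < 10 ^ (-8 : ℤ))
    (hzA : ∀ idx, c idx - ε < (Matrix.vecMul z A) idx)
    (hbound : (p : ℝ) * pt + z ⬝ᵥ b < 7.9999 * pt)
    (hp : p ≤ 116) (hN : N ≤ 60) :
    (p : ℝ) * pt + c ⬝ᵥ x ≤
        (7.9999 * pt + 10 ^ (-8 : ℤ) * (116 * pt + 500)) / (1 + 10 ^ (-8 : ℤ)) ∧
      (7.9999 * pt + 10 ^ (-8 : ℤ) * (116 * pt + 500)) / (1 + 10 ^ (-8 : ℤ)) < 8 * pt := by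
  have he8 : (10:ℝ) ^ (-8 : ℤ) = 1 / 100000000 := by norm_num
  have hptlo : (0.054 : ℝ) ≤ pt := pt_lower pt hpt
  have hπ : Real.pi < 3.141593 := by
    have := Real.pi_lt_d6; linarith
  -- c ⬝ᵥ x = - ∑ over I
  have hcx : c ⬝ᵥ x = -∑ i : Fin nI, x (Sum.inl i) := by
    simp [dotProduct, Fintype.sum_sum_type, hcI, hcJ, Finset.sum_neg_distrib]
  have hcx0 : c ⬝ᵥ x ≤ 0 := by
    rw [hcx]
    simp only [neg_nonpos]
    exact Finset.sum_nonneg fun i _ => hx _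
  -- z ⬝ᵥ (A x) ≤ z ⬝ᵥ b
  have hzb : z ⬝ᵥ A.mulVec x ≤ z ⬝ᵥ b :=
    Finset.sum_le_sum fun i _ => mul_le_mul_of_nonneg_left (hAx i) (hz i)
  rw [Matrix.dotProduct_mulVec] at hzb
  -- lower bound on (vecMul z A) ⬝ᵥ x
  have hlow : c ⬝ᵥ x - ε * ∑ idx, x idx ≤ Matrix.vecMul z A ⬝ᵥ x := by
    have h1 : ∑ idx, (c idx - ε) * x idx ≤ Matrix.vecMul z A ⬝ᵥ x :=
      Finset.sum_le_sum fun idx _ =>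
        mul_le_mul_of_nonneg_right (le_of_lt (hzA idx)) (hx idx)
    calc c ⬝ᵥ x - ε * ∑ idx, x idx = ∑ idx, (c idx - ε) * x idx := by
          simp [dotProduct, sub_mul, Finset.sum_sub_distrib, Finset.mul_sum, mul_add]
      _ ≤ _ := h1
  have hsum : ∑ idx, x idx = (∑ i : Fin nI, x (Sum.inl i)) + ∑ j : Fin nJ, x (Sum.inr j) := by
    simp [Fintype.sum_sum_type]
  -- key inequality : (1+ε) * (c ⬝ᵥ x) ≤ z ⬝ᵥ b + ε * (2 π N)
  have hkey : (1 + ε) * (c ⬝ᵥ x) ≤ z ⬝ᵥ b + ε * (2 * Real.pi * N) := by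
    have h2 : ε * ∑ idx, x idx ≤ ε * (-(c ⬝ᵥ x) + 2 * Real.pi * N) := by
      apply mul_le_mul_of_nonneg_left _ (le_of_lt hε0)
      rw [hsum, hcx]
      linarith
    nlinarith [le_trans hlow hzb]
  have hπN : 2 * Real.pi * N ≤ 500 := by
    have hN' : (N:ℝ) ≤ 60 := by exact_mod_cast hN
    nlinarith [Real.pi_pos]
  have hp' : (p:ℝ) ≤ 116 := by exact_mod_cast hp
  have hS : (p:ℝ) * pt + c ⬝ᵥ x ≤ 116 * pt + 500 := by nlinarith
  have hmain : (1 + 10 ^ (-8 : ℤ)) * ((p:ℝ) * pt + c ⬝ᵥ x)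
      ≤ 7.9999 * pt + 10 ^ (-8 : ℤ) * (116 * pt + 500) := by
    rw [he8]
    rw [he8] at hε
    nlinarith [mul_le_mul_of_nonneg_right hS (by linarith : (0:ℝ) ≤ 1/100000000 - ε),
      mul_le_mul_of_nonneg_left hp' (le_of_lt hε0)]
  have hpos : (0:ℝ) < 1 + 10 ^ (-8 : ℤ) := by rw [he8]; norm_num
  constructor
  · rw [le_div_iff₀ hpos]
    linarith [hmain]
  · rw [div_lt_iff₀ hpos, he8]
    nlinarith
end

section
/- Let φ(h,t) = (4 − 2·δ_oct·h·t·(h+t))/3, t_0 = 1.255, and A(h) = (1 − h/t_0)(φ(h,t_0) − φ(t_0,t_0)). Then for all h ∈ [1, t_0]: A(h) ≥ 0, A'(h) ≤ 0, and A''(h) ≥ 0. -/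
/-!
Both `A` and its derivatives are explicit polynomials: since `φ(h,t) - φ(t,t)` vanishes at `h = t`,
`A(h) = (2δ/3)(t₀ - h)²(h + 2t₀)`, hence `A'(h) = 2δ(h² - t₀²)` and `A''(h) = 4δh`. All three signs
then follow from `δ_oct ≥ 0`, which holds because `2/ζ = 4 arctan(√2/5) ≤ 4 arctan 1 = π`.
-/

open Real

noncomputable def kepZeta : ℝ := (2 * Real.arctan (Real.sqrt 2 / 5))⁻¹

noncomputable def deltaOct : ℝ := (Real.pi - 2 / kepZeta) / Real.sqrt 8

noncomputable def kepPhi (h t : ℝ) : ℝ := (4 - 2 * deltaOct * h * t * (h + t)) / 3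

noncomputable def kepA (h : ℝ) : ℝ :=
  (1 - h / 1.255) * (kepPhi h 1.255 - kepPhi 1.255 1.255)

lemma two_div_kepZeta : 2 / kepZeta = 4 * arctan (√2 / 5) := by
  rw [kepZeta, div_inv_eq_mul]
  ring

lemma deltaOct_nonneg : 0 ≤ deltaOct := by
  have hsqrt : √2 / 5 ≤ 1 := by
    rw [div_le_one (by norm_num), sqrt_le_left (by norm_num)]
    norm_num
  have harctan : arctan (√2 / 5) ≤ π / 4 := arctan_one ▸ arctan_strictMono.monotone hsqrt
  apply div_nonneg _ (sqrt_nonneg 8)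
  rw [two_div_kepZeta]
  linarith

lemma kepPhi_sub_kepPhi (h t : ℝ) :
    kepPhi h t - kepPhi t t = -(2 * deltaOct * t / 3) * (h - t) * (h + 2 * t) := by
  unfold kepPhi
  ring

lemma kepA_eq (h : ℝ) : kepA h = 2 * deltaOct / 3 * ((1.255 - h) ^ 2 * (h + 2 * 1.255)) := by
  rw [kepA, kepPhi_sub_kepPhi]
  ring

lemma hasDerivAt_kepA (h : ℝ) : HasDerivAt kepA (2 * deltaOct * (h ^ 2 - 1.255 ^ 2)) h := by
  have hcubic : kepA = fun h ↦ 2 * deltaOct / 3 * (h ^ 3 - 3 * 1.255 ^ 2 * h + 2 * 1.255 ^ 3) := by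
    funext h
    rw [kepA_eq]
    ring
  rw [hcubic]
  have hpoly := (((hasDerivAt_pow 3 h).sub ((hasDerivAt_id' h).const_mul (3 * 1.255 ^ 2))).add_const
    (2 * 1.255 ^ 3)).const_mul (2 * deltaOct / 3)
  exact hpoly.congr_deriv (by push_cast; ring)

lemma deriv_kepA : deriv kepA = fun h ↦ 2 * deltaOct * (h ^ 2 - 1.255 ^ 2) :=
  funext fun h ↦ (hasDerivAt_kepA h).deriv

lemma deriv_deriv_kepA (h : ℝ) : deriv (deriv kepA) h = 4 * deltaOct * h := by
  rw [deriv_kepA]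
  have hpoly := ((hasDerivAt_pow 2 h).sub_const (1.255 ^ 2)).const_mul (2 * deltaOct)
  exact (hpoly.congr_deriv (by push_cast; ring)).deriv

theorem stmt_10 :
    ∀ h ∈ Set.Icc (1 : ℝ) 1.255,
      0 ≤ kepA h ∧ deriv kepA h ≤ 0 ∧ 0 ≤ deriv (deriv kepA) h := by
  rintro h ⟨h_ge, h_le⟩
  have hδ := deltaOct_nonneg
  refine ⟨?_, ?_, ?_⟩
  · rw [kepA_eq]
    have : 0 ≤ h + 2 * 1.255 := by linarith
    positivity
  · rw [deriv_kepA]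
    have : h ^ 2 ≤ 1.255 ^ 2 := pow_le_pow_left₀ (by linarith) h_le 2
    exact mul_nonpos_of_nonneg_of_nonpos (by positivity) (by linarith)
  · rw [deriv_deriv_kepA]
    have : 0 ≤ h := by linarith
    positivity
end
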